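/- Eavesdropper consistency in the AAG protocol: let G be a group, a ∈ ⟨a₁,…,a_n⟩, b ∈ ⟨b₁,…,b_m⟩. If A ∈ ⟨a₁,…,a_n⟩ and B ∈ ⟨b₁,…,b_m⟩ satisfy A⁻¹b_iA = a⁻¹b_ia for all 1 ≤ i ≤ m and B a_j B⁻¹ = b a_j b⁻¹ for all 1 ≤ j ≤ n, then A⁻¹BAB⁻¹ = a⁻¹bab⁻¹, i.e., the eavesdropper recovers the shared key [a, b⁻¹]. -/
import Mathlib

lemma conj_eq_of_gen {G : Type*} [Group G] (g h : G) (s : Set G)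
    (hgen : ∀ x ∈ s, g * x * g⁻¹ = h * x * h⁻¹) :
    ∀ x ∈ Subgroup.closure s, g * x * g⁻¹ = h * x * h⁻¹ := by
  intro x hx
  induction hx using Subgroup.closure_induction with
  | mem y hy => exact hgen y hy
  | one => group
  | mul y z _ _ hy hz =>
      have : g * (y * z) * g⁻¹ = (g * y * g⁻¹) * (g * z * g⁻¹) := by group
      rw [this, hy, hz]; group
  | inv y _ hy =>
      have : g * y⁻¹ * g⁻¹ = (g * y * g⁻¹)⁻¹ := by group
      rw [this, hy]; group

/-- eavesdropper consistency in the AAG protocol. If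
`A ∈ ⟨a₁,…,a_n⟩` and `B ∈ ⟨b₁,…,b_m⟩` satisfy `A⁻¹ bᵢ A = a⁻¹ bᵢ a` for all `i`
and `B aⱼ B⁻¹ = b aⱼ b⁻¹` for all `j`, where `a ∈ ⟨a₁,…,a_n⟩` and
`b ∈ ⟨b₁,…,b_m⟩`, then `A⁻¹ B A B⁻¹ = a⁻¹ b a b⁻¹`: the eavesdropper recovers
the shared key `[a, b⁻¹]`. -/
theorem stmt_15 {G : Type*} [Group G] {n m : ℕ}
    (as : Fin n → G) (bs : Fin m → G) (a b A B : G)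
    (ha : a ∈ Subgroup.closure (Set.range as))
    (hb : b ∈ Subgroup.closure (Set.range bs))
    (hA : A ∈ Subgroup.closure (Set.range as))
    (hB : B ∈ Subgroup.closure (Set.range bs))
    (h1 : ∀ i : Fin m, A⁻¹ * bs i * A = a⁻¹ * bs i * a)
    (h2 : ∀ j : Fin n, B * as j * B⁻¹ = b * as j * b⁻¹) :
    A⁻¹ * B * A * B⁻¹ = a⁻¹ * b * a * b⁻¹ := by
  have e1 : A⁻¹ * B * A = a⁻¹ * B * a := by
    have := conj_eq_of_gen A⁻¹ a⁻¹ (Set.range bs) ?_ B hB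
    · simpa using this
    · rintro x ⟨i, rfl⟩; simpa using h1 i
  have e2 : B * a * B⁻¹ = b * a * b⁻¹ := by
    refine conj_eq_of_gen B b (Set.range as) ?_ a ha
    rintro x ⟨j, rfl⟩; exact h2 j
  calc A⁻¹ * B * A * B⁻¹ = (A⁻¹ * B * A) * B⁻¹ := by group
    _ = a⁻¹ * (B * a * B⁻¹) := by rw [e1]; group
    _ = a⁻¹ * (b * a * b⁻¹) := by rw [e2]
    _ = a⁻¹ * b * a * b⁻¹ := by group
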